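/- arXiv:2501.13430 — 3 statements merged into one kernel-verified Lean document; each statement's English description precedes it below -/
import Mathlib

section
/- Let X and Y be Polish spaces equipped with their Borel σ-algebras, let μ and ν be Borel probability measures on X, and let f, g : X → Y be Borel measurable maps. Then for every coupling γ' of f#μ and g#ν there exists a coupling γ of μ and ν such that the pushforward of γ under the map (x₁,x₂) ↦ (f(x₁), g(x₂)) equals γ'. Consequently, the set of couplings of f#μ and g#ν is exactly the image of the set of couplings of μ and ν under pushforward by (f × g). -/
open MeasureTheory

/-- The set of couplings of two measures: measures on the product whose marginals
are the given measures. -/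
def couplings {X Y : Type*} [MeasurableSpace X] [MeasurableSpace Y]
    (μ : Measure X) (ν : Measure Y) : Set (Measure (X × Y)) :=
  {γ | γ.map Prod.fst = μ ∧ γ.map Prod.snd = ν}

/-!
Disintegrate `μ` along `f`: on a standard Borel space the conditional distribution
`κ = condDistrib id f μ` is a Markov kernel `Y → X` with `κ ∘ₘ f#μ = μ`, and its fibre measures
live on the fibres of `f`, i.e. `f#(κ y) = δ_y` for `f#μ`-a.e. `y`. Given a coupling `γ'` of
`f#μ` and `g#ν`, draw `(y₁, y₂) ∼ γ'` and then `x₁ ∼ κ y₁`, `x₂ ∼ η y₂` independently, with `η`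
the disintegration of `ν` along `g`. The law of `(x₁, x₂)` has marginals `μ` and `ν`, and `(f × g)`
sends it back to `γ'`.
-/

open ProbabilityTheory

section
variable {X X' Y Y' : Type*} [MeasurableSpace X] [MeasurableSpace X'] [MeasurableSpace Y]
  [MeasurableSpace Y']

theorem map_prodMap_mem_couplings {μ : Measure X} {ν : Measure X'} {γ : Measure (X × X')}
    {f : X → Y} {g : X' → Y'} (hf : Measurable f) (hg : Measurable g) (hγ : γ ∈ couplings μ ν) :
    γ.map (Prod.map f g) ∈ couplings (μ.map f) (ν.map g) := by
  obtain ⟨hμ, hν⟩ := hγ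
  constructor
  · rw [Measure.map_map measurable_fst (hf.prodMap hg), Prod.map_fst',
      ← Measure.map_map hf measurable_fst, hμ]
  · rw [Measure.map_map measurable_snd (hf.prodMap hg), Prod.map_snd',
      ← Measure.map_map hg measurable_snd, hν]

namespace ProbabilityTheory.Kernel

variable (κ : Kernel Y X) (η : Kernel Y' X')

theorem map_fst_parallelComp_comp [IsSFiniteKernel κ] [IsMarkovKernel η] (ρ : Measure (Y × Y')) :
    ((κ ∥ₖ η) ∘ₘ ρ).map Prod.fst = κ ∘ₘ ρ.map Prod.fst := by
  have hfst : (κ ∥ₖ η).map Prod.fst = κ.comap Prod.fst measurable_fst := by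
    ext1 q
    rw [map_apply _ measurable_fst, parallelComp_apply, Measure.map_fst_prod, measure_univ,
      one_smul, comap_apply]
  rw [Measure.map_comp _ _ measurable_fst, hfst, ← comp_deterministic_eq_comap,
    ← Measure.comp_assoc, Measure.deterministic_comp_eq_map]

theorem map_snd_parallelComp_comp [IsMarkovKernel κ] [IsSFiniteKernel η] (ρ : Measure (Y × Y')) :
    ((κ ∥ₖ η) ∘ₘ ρ).map Prod.snd = η ∘ₘ ρ.map Prod.snd := by
  have hsnd : (κ ∥ₖ η).map Prod.snd = η.comap Prod.snd measurable_snd := by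
    ext1 q
    rw [map_apply _ measurable_snd, parallelComp_apply, Measure.map_snd_prod, measure_univ,
      one_smul, comap_apply]
  rw [Measure.map_comp _ _ measurable_snd, hsnd, ← comp_deterministic_eq_comap,
    ← Measure.comp_assoc, Measure.deterministic_comp_eq_map]

theorem parallelComp_comp_mem_couplings [IsMarkovKernel κ] [IsMarkovKernel η] {μ : Measure Y}
    {ν : Measure Y'} {γ : Measure (Y × Y')} (hγ : γ ∈ couplings μ ν) :
    (κ ∥ₖ η) ∘ₘ γ ∈ couplings (κ ∘ₘ μ) (η ∘ₘ ν) :=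
  ⟨by rw [map_fst_parallelComp_comp, hγ.1], by rw [map_snd_parallelComp_comp, hγ.2]⟩

theorem map_prodMap_parallelComp_comp [IsSFiniteKernel κ] [IsSFiniteKernel η] {f : X → Y}
    {g : X' → Y'} (hf : Measurable f) (hg : Measurable g) {γ : Measure (Y × Y')}
    (hκ : κ.map f =ᵐ[γ.map Prod.fst] Kernel.id) (hη : η.map g =ᵐ[γ.map Prod.snd] Kernel.id) :
    ((κ ∥ₖ η) ∘ₘ γ).map (Prod.map f g) = γ := by
  have hid : ∀ᵐ q ∂γ, (κ ∥ₖ η).map (Prod.map f g) q = (Kernel.id ∥ₖ Kernel.id) q := by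
    filter_upwards [ae_of_ae_map measurable_fst.aemeasurable hκ,
      ae_of_ae_map measurable_snd.aemeasurable hη] with q hq₁ hq₂
    rw [map_apply _ (hf.prodMap hg), parallelComp_apply, parallelComp_apply,
      ← Measure.map_prod_map _ _ hf hg, ← map_apply _ hf, ← map_apply _ hg, hq₁, hq₂]
  rw [Measure.map_comp _ _ (hf.prodMap hg), Measure.comp_congr hid, id_parallelComp_id,
    Measure.id_comp]

end ProbabilityTheory.Kernel
end

section
variable {X Y : Type*} [MeasurableSpace X] [StandardBorelSpace X] [Nonempty X]
  [MeasurableSpace Y] {μ : Measure X} [IsFiniteMeasure μ] {f : X → Y}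

theorem condDistrib_id_comp_map (hf : Measurable f) : condDistrib id f μ ∘ₘ μ.map f = μ := by
  rw [condDistrib_comp_map hf.aemeasurable aemeasurable_id, Measure.map_id]

theorem map_condDistrib_id_ae_eq_id [StandardBorelSpace Y] [Nonempty Y] (hf : Measurable f) :
    (condDistrib id f μ).map f =ᵐ[μ.map f] Kernel.id := by
  filter_upwards [condDistrib_comp f aemeasurable_id hf, condDistrib_self (μ := μ) f] with y h₁ h₂
  rw [← h₁, Function.comp_id, h₂]

end

/-- On Polish spaces, every coupling `γ'` of the pushforwards `f#μ` and `g#ν` arises as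
the pushforward of some coupling `γ` of `μ` and `ν` under `(x₁,x₂) ↦ (f x₁, g x₂)`;
consequently the set of couplings of `f#μ` and `g#ν` is exactly the image of the set
of couplings of `μ` and `ν` under this pushforward. -/
theorem couplings_pushforward_surjective
    {X Y : Type*}
    [TopologicalSpace X] [PolishSpace X] [MeasurableSpace X] [BorelSpace X]
    [TopologicalSpace Y] [PolishSpace Y] [MeasurableSpace Y] [BorelSpace Y]
    (μ ν : Measure X) [IsProbabilityMeasure μ] [IsProbabilityMeasure ν]
    (f g : X → Y) (hf : Measurable f) (hg : Measurable g) :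
    (∀ γ' ∈ couplings (μ.map f) (ν.map g),
        ∃ γ ∈ couplings μ ν, γ.map (fun p : X × X => (f p.1, g p.2)) = γ') ∧
    couplings (μ.map f) (ν.map g)
      = (fun γ : Measure (X × X) => γ.map (fun p : X × X => (f p.1, g p.2))) ''
          couplings μ ν := by
  have hX : Nonempty X := nonempty_of_isProbabilityMeasure μ
  have hY : Nonempty Y := hX.map f
  have lift : ∀ γ' ∈ couplings (μ.map f) (ν.map g),
      ∃ γ ∈ couplings μ ν, γ.map (Prod.map f g) = γ' := by
    intro γ' hγ'
    refine ⟨(condDistrib id f μ ∥ₖ condDistrib id g ν) ∘ₘ γ', ?_, ?_⟩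
    · simpa only [condDistrib_id_comp_map hf, condDistrib_id_comp_map hg] using
        Kernel.parallelComp_comp_mem_couplings (condDistrib id f μ) (condDistrib id g ν) hγ'
    · refine Kernel.map_prodMap_parallelComp_comp _ _ hf hg ?_ ?_
      · rw [hγ'.1]; exact map_condDistrib_id_ae_eq_id hf
      · rw [hγ'.2]; exact map_condDistrib_id_ae_eq_id hg
  refine ⟨lift, Set.Subset.antisymm lift ?_⟩
  rintro _ ⟨γ, hγ, rfl⟩
  exact map_prodMap_mem_couplings hf hg hγ
end

section
/- Let X be a Polish space with its Borel σ-algebra, let Q be a Borel probability measure on X, let s_P, s_Q, f_P, f_Q : X → ℝ be Borel measurable functions, and let η ≥ 0 be such that |s_P(x₁) − s_Q(x₂)| ≤ η · |f_P(x₁) − f_Q(x₂)| for all x₁, x₂ ∈ X. Then the 1-Wasserstein distance between the pushforward measures satisfies W(s_P#Q, s_Q#Q) ≤ η · W(f_P#Q, f_Q#Q), where ℝ carries the Euclidean metric |·|. -/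
open MeasureTheory ENNReal

/-- The 1-Wasserstein distance, valued in `[0,∞]`. -/
noncomputable def wassersteinDist {X : Type*} [MeasurableSpace X] [PseudoEMetricSpace X]
    (μ ν : Measure X) : ℝ≥0∞ :=
  ⨅ γ ∈ couplings μ ν, ∫⁻ p : X × X, edist p.1 p.2 ∂γ

/-- Gluing lemma: given a coupling `γ` of the first marginals of `μ` and `ν`, there is a
measure `Γ` on `(ℝ×ℝ) × (ℝ×ℝ)` with marginals `μ` and `ν` whose "first coordinates"
marginal is `γ`. -/
lemma exists_glue (γ μ ν : Measure (ℝ × ℝ)) [IsProbabilityMeasure γ]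
    [IsFiniteMeasure μ] [IsFiniteMeasure ν]
    (h1 : γ.map Prod.fst = μ.fst) (h2 : γ.map Prod.snd = ν.fst) :
    ∃ Γ : Measure ((ℝ × ℝ) × (ℝ × ℝ)),
      Γ.map Prod.fst = μ ∧ Γ.map Prod.snd = ν ∧
      Γ.map (fun p => (p.1.1, p.2.1)) = γ := by
  set κ := μ.condKernel with hκ
  set lam := ν.condKernel with hlam
  set K : ProbabilityTheory.Kernel (ℝ × ℝ) (ℝ × ℝ) :=
    (κ.comap Prod.fst measurable_fst).prod (lam.comap Prod.snd measurable_snd) with hK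
  set m : Measure ((ℝ × ℝ) × (ℝ × ℝ)) := γ.compProd K with hm
  have he : Measurable (fun q : (ℝ × ℝ) × (ℝ × ℝ) => ((q.1.1, q.2.1), (q.1.2, q.2.2))) := by
    fun_prop
  refine ⟨m.map (fun q => ((q.1.1, q.2.1), (q.1.2, q.2.2))), ?_, ?_, ?_⟩
  · -- first marginal is μ
    rw [Measure.map_map measurable_fst he]
    have hg : Measurable (fun q : (ℝ × ℝ) × (ℝ × ℝ) => (q.1.1, q.2.1)) := by fun_prop
    have : (Prod.fst ∘ fun q : (ℝ × ℝ) × (ℝ × ℝ) => ((q.1.1, q.2.1), (q.1.2, q.2.2)))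
        = fun q => (q.1.1, q.2.1) := rfl
    rw [this]
    ext A hA
    rw [Measure.map_apply hg hA, hm, Measure.compProd_apply (hg hA)]
    have hval : ∀ p : ℝ × ℝ,
        K p (Prod.mk p ⁻¹' ((fun q : (ℝ × ℝ) × (ℝ × ℝ) => (q.1.1, q.2.1)) ⁻¹' A))
          = κ p.1 (Prod.mk p.1 ⁻¹' A) := by
      intro p
      have hset : (Prod.mk p ⁻¹' ((fun q : (ℝ × ℝ) × (ℝ × ℝ) => (q.1.1, q.2.1)) ⁻¹' A))
          = (Prod.mk p.1 ⁻¹' A) ×ˢ Set.univ := by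
        ext st; simp [Set.mem_prod]
      rw [hset, hK, ProbabilityTheory.Kernel.prod_apply,
        ProbabilityTheory.Kernel.comap_apply, ProbabilityTheory.Kernel.comap_apply,
        Measure.prod_prod, measure_univ, mul_one]
    simp_rw [hval]
    rw [show (∫⁻ p : ℝ × ℝ, κ p.1 (Prod.mk p.1 ⁻¹' A) ∂γ)
        = ∫⁻ a, κ a (Prod.mk a ⁻¹' A) ∂(γ.map Prod.fst) from
      (lintegral_map (ProbabilityTheory.Kernel.measurable_kernel_prodMk_left hA)
        measurable_fst).symm]
    rw [h1, ← Measure.compProd_apply hA, hκ, μ.disintegrate μ.condKernel]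
  · -- second marginal is ν
    rw [Measure.map_map measurable_snd he]
    have hg : Measurable (fun q : (ℝ × ℝ) × (ℝ × ℝ) => (q.1.2, q.2.2)) := by fun_prop
    have : (Prod.snd ∘ fun q : (ℝ × ℝ) × (ℝ × ℝ) => ((q.1.1, q.2.1), (q.1.2, q.2.2)))
        = fun q => (q.1.2, q.2.2) := rfl
    rw [this]
    ext A hA
    rw [Measure.map_apply hg hA, hm, Measure.compProd_apply (hg hA)]
    have hval : ∀ p : ℝ × ℝ,
        K p (Prod.mk p ⁻¹' ((fun q : (ℝ × ℝ) × (ℝ × ℝ) => (q.1.2, q.2.2)) ⁻¹' A))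
          = lam p.2 (Prod.mk p.2 ⁻¹' A) := by
      intro p
      have hset : (Prod.mk p ⁻¹' ((fun q : (ℝ × ℝ) × (ℝ × ℝ) => (q.1.2, q.2.2)) ⁻¹' A))
          = Set.univ ×ˢ (Prod.mk p.2 ⁻¹' A) := by
        ext st; simp [Set.mem_prod]
      rw [hset, hK, ProbabilityTheory.Kernel.prod_apply,
        ProbabilityTheory.Kernel.comap_apply, ProbabilityTheory.Kernel.comap_apply,
        Measure.prod_prod, measure_univ, one_mul]
    simp_rw [hval]
    rw [show (∫⁻ p : ℝ × ℝ, lam p.2 (Prod.mk p.2 ⁻¹' A) ∂γ)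
        = ∫⁻ b, lam b (Prod.mk b ⁻¹' A) ∂(γ.map Prod.snd) from
      (lintegral_map (ProbabilityTheory.Kernel.measurable_kernel_prodMk_left hA)
        measurable_snd).symm]
    rw [h2, ← Measure.compProd_apply hA, hlam, ν.disintegrate ν.condKernel]
  · -- "first coordinates" marginal is γ
    rw [Measure.map_map (by fun_prop : Measurable
      (fun p : (ℝ × ℝ) × (ℝ × ℝ) => (p.1.1, p.2.1))) he]
    have : ((fun p : (ℝ × ℝ) × (ℝ × ℝ) => (p.1.1, p.2.1)) ∘
        fun q : (ℝ × ℝ) × (ℝ × ℝ) => ((q.1.1, q.2.1), (q.1.2, q.2.2)))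
        = Prod.fst := by
      funext q; simp
    rw [this]
    have : m.map Prod.fst = m.fst := rfl
    rw [this, hm, Measure.fst_compProd]

/-- If `|s_P x₁ − s_Q x₂| ≤ η · |f_P x₁ − f_Q x₂|` for all `x₁, x₂`, then
`W(s_P#Q, s_Q#Q) ≤ η · W(f_P#Q, f_Q#Q)`. -/
theorem wasserstein_score_le_concept
    {X : Type*}
    [TopologicalSpace X] [PolishSpace X] [MeasurableSpace X] [BorelSpace X]
    (Q : Measure X) [IsProbabilityMeasure Q]
    (sP sQ fP fQ : X → ℝ)
    (hsP : Measurable sP) (hsQ : Measurable sQ)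
    (hfP : Measurable fP) (hfQ : Measurable fQ)
    (η : ℝ) (hη : 0 ≤ η)
    (hbound : ∀ x₁ x₂ : X, |sP x₁ - sQ x₂| ≤ η * |fP x₁ - fQ x₂|) :
    wassersteinDist (Q.map sP) (Q.map sQ)
      ≤ ENNReal.ofReal η * wassersteinDist (Q.map fP) (Q.map fQ) := by
  have hP : Measurable (fun x => (fP x, sP x)) := hfP.prodMk hsP
  have hQm : Measurable (fun x => (fQ x, sQ x)) := hfQ.prodMk hsQ
  set μ : Measure (ℝ × ℝ) := Q.map (fun x => (fP x, sP x)) with hμ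
  set ν : Measure (ℝ × ℝ) := Q.map (fun x => (fQ x, sQ x)) with hν
  haveI : IsProbabilityMeasure μ := Measure.isProbabilityMeasure_map hP.aemeasurable
  haveI : IsProbabilityMeasure ν := Measure.isProbabilityMeasure_map hQm.aemeasurable
  haveI : IsProbabilityMeasure (Q.map fP) := Measure.isProbabilityMeasure_map hfP.aemeasurable
  haveI : IsProbabilityMeasure (Q.map fQ) := Measure.isProbabilityMeasure_map hfQ.aemeasurable
  have hμfst : μ.fst = Q.map fP := by
    rw [hμ, Measure.fst, Measure.map_map measurable_fst hP]; rfl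
  have hνfst : ν.fst = Q.map fQ := by
    rw [hν, Measure.fst, Measure.map_map measurable_fst hQm]; rfl
  have hμsnd : μ.map Prod.snd = Q.map sP := by
    rw [hμ, Measure.map_map measurable_snd hP]; rfl
  have hνsnd : ν.map Prod.snd = Q.map sQ := by
    rw [hν, Measure.map_map measurable_snd hQm]; rfl
  -- the closed sets carrying the measures
  set A : Set (ℝ × ℝ) := closure (Set.range fun x => (fP x, sP x)) with hA
  set B : Set (ℝ × ℝ) := closure (Set.range fun x => (fQ x, sQ x)) with hB
  have hμA : μ Aᶜ = 0 := by
    rw [hμ, Measure.map_apply hP isClosed_closure.measurableSet.compl]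
    have : (fun x => (fP x, sP x)) ⁻¹' Aᶜ = ∅ := by
      ext x
      simp only [Set.mem_preimage, Set.mem_compl_iff, Set.mem_empty_iff_false, iff_false,
        not_not]
      exact subset_closure (Set.mem_range_self x)
    rw [this, measure_empty]
  have hνB : ν Bᶜ = 0 := by
    rw [hν, Measure.map_apply hQm isClosed_closure.measurableSet.compl]
    have : (fun x => (fQ x, sQ x)) ⁻¹' Bᶜ = ∅ := by
      ext x
      simp only [Set.mem_preimage, Set.mem_compl_iff, Set.mem_empty_iff_false, iff_false,
        not_not]
      exact subset_closure (Set.mem_range_self x)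
    rw [this, measure_empty]
  -- the Lipschitz-type inequality on A ×ˢ B
  have hAB : ∀ u ∈ A, ∀ v ∈ B, dist u.2 v.2 ≤ η * dist u.1 v.1 := by
    set C : Set ((ℝ × ℝ) × (ℝ × ℝ)) := {q | dist q.1.2 q.2.2 ≤ η * dist q.1.1 q.2.1} with hC
    have hCclosed : IsClosed C := by
      apply isClosed_le
      · fun_prop
      · fun_prop
    have hsub : A ×ˢ B ⊆ C := by
      rw [hA, hB, ← closure_prod_eq]
      apply hCclosed.closure_subset_iff.mpr
      rintro ⟨u, v⟩ ⟨⟨x₁, rfl⟩, ⟨x₂, rfl⟩⟩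
      simp only [hC, Set.mem_setOf_eq, Real.dist_eq]
      exact hbound x₁ x₂
    intro u hu v hv
    exact hsub (Set.mk_mem_prod hu hv)
  -- key step : bound against the cost of any coupling
  have key : ∀ γ ∈ couplings (Q.map fP) (Q.map fQ),
      wassersteinDist (Q.map sP) (Q.map sQ)
        ≤ ENNReal.ofReal η * ∫⁻ p : ℝ × ℝ, edist p.1 p.2 ∂γ := by
    intro γ hγ
    obtain ⟨hγ1, hγ2⟩ := hγ
    haveI : IsProbabilityMeasure γ := by
      constructor
      rw [← Set.preimage_univ (f := Prod.fst), ← Measure.map_apply measurable_fst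
        MeasurableSet.univ, hγ1, measure_univ]
    obtain ⟨Γ, hΓ1, hΓ2, hΓγ⟩ := exists_glue γ μ ν (by rw [hγ1, hμfst]) (by rw [hγ2, hνfst])
    -- the induced coupling of the score pushforwards
    have hmeas_s : Measurable (fun p : (ℝ × ℝ) × (ℝ × ℝ) => (p.1.2, p.2.2)) := by fun_prop
    have hcoupling : Γ.map (fun p => (p.1.2, p.2.2)) ∈ couplings (Q.map sP) (Q.map sQ) := by
      constructor
      · rw [Measure.map_map measurable_fst hmeas_s]
        have : (Prod.fst ∘ fun p : (ℝ × ℝ) × (ℝ × ℝ) => (p.1.2, p.2.2))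
            = (Prod.snd ∘ Prod.fst) := rfl
        rw [this, ← Measure.map_map measurable_snd measurable_fst, hΓ1, hμsnd]
      · rw [Measure.map_map measurable_snd hmeas_s]
        have : (Prod.snd ∘ fun p : (ℝ × ℝ) × (ℝ × ℝ) => (p.1.2, p.2.2))
            = (Prod.snd ∘ Prod.snd) := rfl
        rw [this, ← Measure.map_map measurable_snd measurable_snd, hΓ2, hνsnd]
    have hle : wassersteinDist (Q.map sP) (Q.map sQ)
        ≤ ∫⁻ p : ℝ × ℝ, edist p.1 p.2 ∂(Γ.map (fun p => (p.1.2, p.2.2))) := by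
      exact iInf₂_le _ hcoupling
    refine hle.trans ?_
    rw [lintegral_map (by fun_prop) hmeas_s]
    -- a.e. bound
    have hΓA : Γ {p | p.1 ∉ A} = 0 := by
      have : {p : (ℝ × ℝ) × (ℝ × ℝ) | p.1 ∉ A} = Prod.fst ⁻¹' Aᶜ := rfl
      rw [this, ← Measure.map_apply measurable_fst isClosed_closure.measurableSet.compl, hΓ1,
        hμA]
    have hΓB : Γ {p | p.2 ∉ B} = 0 := by
      have : {p : (ℝ × ℝ) × (ℝ × ℝ) | p.2 ∉ B} = Prod.snd ⁻¹' Bᶜ := rfl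
      rw [this, ← Measure.map_apply measurable_snd isClosed_closure.measurableSet.compl, hΓ2,
        hνB]
    have hae : ∀ᵐ p ∂Γ, edist p.1.2 p.2.2 ≤ ENNReal.ofReal η * edist p.1.1 p.2.1 := by
      have h1 : ∀ᵐ p ∂Γ, p.1 ∈ A := by
        rw [MeasureTheory.ae_iff]; exact hΓA
      have h2 : ∀ᵐ p ∂Γ, p.2 ∈ B := by
        rw [MeasureTheory.ae_iff]; exact hΓB
      filter_upwards [h1, h2] with p hp1 hp2
      have := hAB p.1 hp1 p.2 hp2
      rw [edist_dist, edist_dist]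
      calc ENNReal.ofReal (dist p.1.2 p.2.2) ≤ ENNReal.ofReal (η * dist p.1.1 p.2.1) :=
            ENNReal.ofReal_le_ofReal this
        _ = ENNReal.ofReal η * ENNReal.ofReal (dist p.1.1 p.2.1) :=
            ENNReal.ofReal_mul hη
    calc ∫⁻ p, edist p.1.2 p.2.2 ∂Γ
        ≤ ∫⁻ p, ENNReal.ofReal η * edist p.1.1 p.2.1 ∂Γ := lintegral_mono_ae hae
      _ = ENNReal.ofReal η * ∫⁻ p, edist p.1.1 p.2.1 ∂Γ :=
          lintegral_const_mul' _ _ ENNReal.ofReal_ne_top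
      _ = ENNReal.ofReal η * ∫⁻ p : ℝ × ℝ, edist p.1 p.2 ∂γ := by
          rw [← hΓγ, lintegral_map (by fun_prop) (by fun_prop)]
  -- conclude by taking the infimum over couplings
  have hne : Nonempty (couplings (Q.map fP) (Q.map fQ)) := by
    refine ⟨⟨(Q.map fP).prod (Q.map fQ), ?_, ?_⟩⟩
    · exact Measure.map_fst_prod .. |>.trans (by simp)
    · exact Measure.map_snd_prod .. |>.trans (by simp)
  conv_rhs => rw [wassersteinDist, iInf_subtype']
  rw [ENNReal.mul_iInf (by simp)]
  exact le_iInf fun γ => key γ.1 γ.2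
end

section
/- Let μ be a probability measure on ℝ that is absolutely continuous with respect to Lebesgue measure with a density bounded above by L > 0. Then for every probability measure ν on ℝ, the Kolmogorov distance satisfies K(μ, ν) ≤ √(2 · L · W(μ, ν)), where W is the 1-Wasserstein distance on ℝ with the Euclidean metric. -/
/-!
For a coupling `γ` of `μ` and `ν`, `|F_μ t - F_ν t|` is at most the `γ`-mass of the pairs `p`
with `t ∈ [min p.1 p.2, max p.1 p.2)`; integrating in `t` (Tonelli) gives
`∫ |F_μ - F_ν| ≤ ∫ |p.1 - p.2| dγ`, hence `∫ |F_μ - F_ν| ≤ W(μ, ν)`.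
On the other hand `F_μ` is `L`-Lipschitz and `F_ν` is nondecreasing, so if `|F_μ - F_ν| = ε` at
`x`, then on one side of `x` the difference stays above the tent `ε - L |t - x|`, whose integral
is `ε² / (2L)`. Thus `ε² ≤ 2 L W(μ, ν)`.
-/

open MeasureTheory ENNReal

open Set ProbabilityTheory

theorem MeasureTheory.Measure.le_smul_of_rnDeriv_le {α : Type*} [MeasurableSpace α]
    {μ ν : Measure α} [μ.HaveLebesgueDecomposition ν] (hac : μ ≪ ν) {c : ℝ≥0∞}
    (h : ∀ᵐ x ∂ν, μ.rnDeriv ν x ≤ c) : μ ≤ c • ν := by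
  rw [← Measure.withDensity_rnDeriv_eq μ ν hac, ← withDensity_const]
  exact withDensity_mono h

theorem cdf_sub_cdf_le_of_rnDeriv_le {μ : Measure ℝ} [IsProbabilityMeasure μ]
    (hac : μ ≪ volume) {L : ℝ} (hL : 0 ≤ L)
    (hdens : ∀ᵐ x ∂volume, μ.rnDeriv volume x ≤ ENNReal.ofReal L)
    {s t : ℝ} (hst : s ≤ t) : cdf μ t - cdf μ s ≤ L * (t - s) := by
  have h : μ (Ioc s t) ≤ ENNReal.ofReal (L * (t - s)) := by
    calc μ (Ioc s t) ≤ (ENNReal.ofReal L • volume) (Ioc s t) :=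
          Measure.le_smul_of_rnDeriv_le hac hdens _
      _ = ENNReal.ofReal (L * (t - s)) := by
          rw [Measure.smul_apply, Real.volume_Ioc, smul_eq_mul, ENNReal.ofReal_mul hL]
  rwa [← measure_cdf μ, StieltjesFunction.measure_Ioc,
    ENNReal.ofReal_le_ofReal_iff (mul_nonneg hL (sub_nonneg.2 hst))] at h

theorem isProbabilityMeasure_of_mem_couplings {X Y : Type*} [MeasurableSpace X]
    [MeasurableSpace Y] {μ : Measure X} {ν : Measure Y} [IsProbabilityMeasure μ]
    {γ : Measure (X × Y)} (hγ : γ ∈ couplings μ ν) : IsProbabilityMeasure γ := by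
  have : IsProbabilityMeasure (γ.map Prod.fst) := hγ.1 ▸ ‹_›
  exact Measure.isProbabilityMeasure_of_map Prod.fst

theorem abs_cdf_sub_cdf_le_of_mem_couplings {μ ν : Measure ℝ} [IsProbabilityMeasure μ]
    [IsProbabilityMeasure ν] {γ : Measure (ℝ × ℝ)} (hγ : γ ∈ couplings μ ν) (t : ℝ) :
    |cdf μ t - cdf ν t| ≤ γ.real {p | t ∈ Ico (min p.1 p.2) (max p.1 p.2)} := by
  have := isProbabilityMeasure_of_mem_couplings hγ
  have hμ : cdf μ t = γ.real {p | p.1 ≤ t} := by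
    rw [cdf_eq_real, ← hγ.1, map_measureReal_apply measurable_fst measurableSet_Iic]; rfl
  have hν : cdf ν t = γ.real {p | p.2 ≤ t} := by
    rw [cdf_eq_real, ← hγ.2, map_measureReal_apply measurable_snd measurableSet_Iic]; rfl
  have h₁ : {p : ℝ × ℝ | p.1 ≤ t} ⊆
      {p | p.2 ≤ t} ∪ {p | t ∈ Ico (min p.1 p.2) (max p.1 p.2)} := fun p hp ↦
    (le_or_gt p.2 t).imp id fun h ↦ ⟨(min_le_left _ _).trans hp, lt_max_of_lt_right h⟩
  have h₂ : {p : ℝ × ℝ | p.2 ≤ t} ⊆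
      {p | p.1 ≤ t} ∪ {p | t ∈ Ico (min p.1 p.2) (max p.1 p.2)} := fun p hp ↦
    (le_or_gt p.1 t).imp id fun h ↦ ⟨(min_le_right _ _).trans hp, lt_max_of_lt_left h⟩
  rw [hμ, hν, abs_sub_le_iff, sub_le_iff_le_add', sub_le_iff_le_add']
  exact ⟨(measureReal_mono h₁).trans (measureReal_union_le _ _),
    (measureReal_mono h₂).trans (measureReal_union_le _ _)⟩

theorem lintegral_measure_mem_Ico_min_max (γ : Measure (ℝ × ℝ)) [SFinite γ] :
    ∫⁻ t, γ {p | t ∈ Ico (min p.1 p.2) (max p.1 p.2)} = ∫⁻ p, edist p.1 p.2 ∂γ := by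
  set S : Set (ℝ × (ℝ × ℝ)) := {q | q.1 ∈ Ico (min q.2.1 q.2.2) (max q.2.1 q.2.2)}
  have hS : MeasurableSet S := (measurableSet_le (by fun_prop) measurable_fst).inter
    (measurableSet_lt measurable_fst (by fun_prop))
  calc ∫⁻ t, γ {p | t ∈ Ico (min p.1 p.2) (max p.1 p.2)} = (volume.prod γ) S :=
        (Measure.prod_apply hS).symm
    _ = ∫⁻ p, volume (Ico (min p.1 p.2) (max p.1 p.2)) ∂γ := Measure.prod_apply_symm hS
    _ = ∫⁻ p, edist p.1 p.2 ∂γ := by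
        simp_rw [Real.volume_Ico, max_sub_min_eq_abs', edist_dist, Real.dist_eq]

theorem ofReal_sq_div_le_lintegral_abs_sub_of_le {f g : ℝ → ℝ} (hf : Monotone f) {L : ℝ}
    (hL : 0 < L) {x : ℝ} (hg : ∀ t, x ≤ t → g t - g x ≤ L * (t - x)) (hx : g x ≤ f x) :
    ENNReal.ofReal ((f x - g x) ^ 2 / (2 * L)) ≤ ∫⁻ t, ENNReal.ofReal |f t - g t| := by
  set ε := f x - g x
  have hwedge : ∫ t in x..x + ε / L, (ε - L * (t - x)) = ε ^ 2 / (2 * L) := by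
    rw [intervalIntegral.integral_comp_sub_right (fun t ↦ ε - L * t),
      intervalIntegral.integral_sub intervalIntegrable_const
        ((continuous_const_mul L).intervalIntegrable _ _),
      intervalIntegral.integral_const_mul, integral_id, intervalIntegral.integral_const,
      smul_eq_mul]
    field_simp
    ring
  have hnonneg : ∀ t ∈ Ioc x (x + ε / L), 0 ≤ ε - L * (t - x) := fun t ht ↦ by
    have := (le_div_iff₀' hL).1 (sub_le_iff_le_add'.2 ht.2)
    linarith
  have hbelow : ∀ t ∈ Ioc x (x + ε / L), ε - L * (t - x) ≤ |f t - g t| := fun t ht ↦ by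
    have := hf ht.1.le
    have := hg t ht.1.le
    exact le_abs_self (f t - g t) |>.trans' (by linarith)
  calc ENNReal.ofReal (ε ^ 2 / (2 * L))
      = ∫⁻ t in Ioc x (x + ε / L), ENNReal.ofReal (ε - L * (t - x)) := by
        have hδ : 0 ≤ ε / L := div_nonneg (sub_nonneg.2 hx) hL.le
        rw [← hwedge, intervalIntegral.integral_of_le (by linarith)]
        exact ofReal_integral_eq_lintegral_ofReal (by fun_prop : Continuous _).integrableOn_Ioc
          ((ae_restrict_iff' measurableSet_Ioc).2 (ae_of_all _ hnonneg))
    _ ≤ ∫⁻ t in Ioc x (x + ε / L), ENNReal.ofReal |f t - g t| :=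
        setLIntegral_mono' measurableSet_Ioc fun t ht ↦ ENNReal.ofReal_le_ofReal (hbelow t ht)
    _ ≤ ∫⁻ t, ENNReal.ofReal |f t - g t| := setLIntegral_le_lintegral _ _

theorem ofReal_sq_div_le_lintegral_abs_sub {f g : ℝ → ℝ} (hf : Monotone f) {L : ℝ}
    (hL : 0 < L) (hg : ∀ s t, s ≤ t → g t - g s ≤ L * (t - s)) (x : ℝ) :
    ENNReal.ofReal ((f x - g x) ^ 2 / (2 * L)) ≤ ∫⁻ t, ENNReal.ofReal |f t - g t| := by
  rcases le_total (g x) (f x) with h | h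
  · exact ofReal_sq_div_le_lintegral_abs_sub_of_le hf hL (hg x) h
  -- `t ↦ -t` exchanges the two sides of `x`
  · have hrefl := ofReal_sq_div_le_lintegral_abs_sub_of_le (f := fun t ↦ -f (-t))
      (g := fun t ↦ -g (-t)) (x := -x) (fun s t hst ↦ neg_le_neg (hf (neg_le_neg hst))) hL
      (fun t ht ↦ by simpa [mul_comm, add_comm] using hg (-t) x (neg_le.1 ht)) (by simpa using h)
    simp_rw [neg_neg, neg_sub_neg, abs_sub_comm (g _)] at hrefl
    rwa [lintegral_neg_eq_self (fun t ↦ ENNReal.ofReal |f t - g t|), ← neg_sub, neg_sq]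
      at hrefl

theorem lintegral_abs_cdf_sub_cdf_le_wassersteinDist (μ ν : Measure ℝ)
    [IsProbabilityMeasure μ] [IsProbabilityMeasure ν] :
    ∫⁻ t, ENNReal.ofReal |cdf μ t - cdf ν t| ≤ wassersteinDist μ ν := by
  refine le_iInf₂ fun γ hγ ↦ ?_
  have := isProbabilityMeasure_of_mem_couplings hγ
  calc ∫⁻ t, ENNReal.ofReal |cdf μ t - cdf ν t|
      ≤ ∫⁻ t, γ {p | t ∈ Ico (min p.1 p.2) (max p.1 p.2)} := lintegral_mono fun t ↦
        (ENNReal.ofReal_le_ofReal (abs_cdf_sub_cdf_le_of_mem_couplings hγ t)).trans_eq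
          (ofReal_measureReal (measure_ne_top _ _))
    _ = ∫⁻ p, edist p.1 p.2 ∂γ := lintegral_measure_mem_Ico_min_max γ

theorem ofReal_abs_le_rpow_of_ofReal_sq_div_le {d L : ℝ} {w : ℝ≥0∞} (hL : 0 < L)
    (h : ENNReal.ofReal (d ^ 2 / (2 * L)) ≤ w) :
    ENNReal.ofReal |d| ≤ (2 * ENNReal.ofReal L * w) ^ (1 / 2 : ℝ) := by
  rw [one_div, ENNReal.le_rpow_inv_iff two_pos, ENNReal.rpow_two,
    ← ENNReal.ofReal_pow (abs_nonneg d), sq_abs]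
  calc ENNReal.ofReal (d ^ 2) = ENNReal.ofReal (2 * L) * ENNReal.ofReal (d ^ 2 / (2 * L)) := by
        rw [← ENNReal.ofReal_mul (by positivity), mul_div_cancel₀ _ (by positivity)]
    _ ≤ 2 * ENNReal.ofReal L * w := by
        rw [ENNReal.ofReal_mul zero_le_two, ENNReal.ofReal_ofNat]
        gcongr

theorem ENNReal.ofReal_iSup_le {ι : Sort*} {f : ι → ℝ} {c : ℝ≥0∞}
    (h : ∀ i, ENNReal.ofReal (f i) ≤ c) : ENNReal.ofReal (⨆ i, f i) ≤ c := by
  rcases eq_or_ne c ⊤ with rfl | hc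
  · exact le_top
  · simp only [ofReal_le_iff_le_toReal hc] at h ⊢
    exact Real.iSup_le h toReal_nonneg

/-- If `μ` is a probability measure on `ℝ` absolutely continuous w.r.t. Lebesgue measure
with density bounded above by `L > 0`, then for any probability measure `ν` on `ℝ`, the
Kolmogorov distance satisfies `K(μ,ν) ≤ √(2 · L · W(μ,ν))`. -/
theorem kolmogorov_le_sqrt_wasserstein
    (μ ν : Measure ℝ) [IsProbabilityMeasure μ] [IsProbabilityMeasure ν]
    (L : ℝ) (hL : 0 < L)
    (hac : μ ≪ volume)
    (hdens : ∀ᵐ x ∂(volume : Measure ℝ), μ.rnDeriv volume x ≤ ENNReal.ofReal L) :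
    ENNReal.ofReal (⨆ x : ℝ, |(μ (Set.Iic x)).toReal - (ν (Set.Iic x)).toReal|)
      ≤ (2 * ENNReal.ofReal L * wassersteinDist μ ν) ^ (1/2 : ℝ) := by
  refine ENNReal.ofReal_iSup_le fun x ↦ ?_
  have hlip : ∀ s t, s ≤ t → cdf μ t - cdf μ s ≤ L * (t - s) :=
    fun _ _ ↦ cdf_sub_cdf_le_of_rnDeriv_le hac hL.le hdens
  have hK := ofReal_sq_div_le_lintegral_abs_sub (monotone_cdf ν) hL hlip x
  simp_rw [abs_sub_comm (cdf ν _)] at hK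
  rw [← measureReal_def, ← measureReal_def, ← cdf_eq_real, ← cdf_eq_real, abs_sub_comm]
  exact ofReal_abs_le_rpow_of_ofReal_sq_div_le hL
    (hK.trans (lintegral_abs_cdf_sub_cdf_le_wassersteinDist μ ν))
end
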